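/- Let X ~ Poisson(λ) and δ ≥ 1/√λ with λ(1+δ) an integer. There exists a universal constant c > 0 such that for all sufficiently large λ, P(X ≥ λ(1+δ)) ≥ c · e^{−λ h(δ)} / √(λ · min{δ, δ²}), where h(δ) = (1+δ)log(1+δ) − δ. -/

import Mathlib

/-- The probability that a Poisson(μ) random variable equals `k`. -/
noncomputable def poissonProb (μ : ℝ) (k : ℕ) : ℝ :=
  Real.exp (-μ) * μ ^ k / (Nat.factorial k : ℝ)

/-- The upper tail `P(X ≥ x)` of a Poisson(μ) random variable. -/
noncomputable def poissonTail (μ : ℝ) (x : ℝ) : ℝ :=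
  ∑' k : ℕ, if x ≤ (k : ℝ) then poissonProb μ k else 0

/-- The large deviation rate function `h(δ) = (1+δ)log(1+δ) − δ`. -/
noncomputable def poissonRate (δ : ℝ) : ℝ := (1 + δ) * Real.log (1 + δ) - δ

/-!
Put `k = λ(1+δ)`. Stirling's upper bound `k! ≤ e √k (k/e)^k` gives `P(X = k) ≥ e^{-λh(δ)} / (e √k)`.
Passing from `P(X = j)` to `P(X = j+1)` multiplies by `λ/(j+1)`, so the `m + 1` probabilities
`P(X = k), …, P(X = k+m)` with `m = ⌊1/δ⌋` all exceed `P(X = k) (1+2δ)^{-m} ≥ e^{-2} P(X = k)`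
(using `m ≤ 1/δ ≤ λδ`). There are `m + 1 ≥ max(1, 1/δ)` of them, and
`(m+1)² min(δ, δ²) ≥ (1+δ)/2` turns the factor `(m+1)/√k` into `1/(2√(λ min(δ, δ²)))`.
-/

open Real Nat

theorem factorial_le_exp_one_mul_sqrt_mul {n : ℕ} (hn : n ≠ 0) :
    (n ! : ℝ) ≤ exp 1 * √n * (n / exp 1) ^ n := by
  obtain ⟨m, rfl⟩ := Nat.exists_eq_succ_of_ne_zero hn
  have hseq : Stirling.stirlingSeq (m + 1) ≤ exp 1 / √2 := by
    simpa [Stirling.stirlingSeq_one] using Stirling.stirlingSeq'_antitone (Nat.zero_le m)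
  have hpos : 0 < √(2 * (m + 1 : ℕ)) * ((m + 1 : ℕ) / exp 1) ^ (m + 1) := by positivity
  calc ((m + 1) ! : ℝ)
      = Stirling.stirlingSeq (m + 1) * (√(2 * (m + 1 : ℕ)) * ((m + 1 : ℕ) / exp 1) ^ (m + 1)) := by
        rw [Stirling.stirlingSeq, div_mul_cancel₀ _ hpos.ne']
    _ ≤ exp 1 / √2 * (√(2 * (m + 1 : ℕ)) * ((m + 1 : ℕ) / exp 1) ^ (m + 1)) := by gcongr
    _ = exp 1 * √(m + 1 : ℕ) * ((m + 1 : ℕ) / exp 1) ^ (m + 1) := by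
        rw [Real.sqrt_mul zero_le_two]
        field_simp

theorem poissonProb_nonneg {μ : ℝ} (hμ : 0 ≤ μ) (k : ℕ) : 0 ≤ poissonProb μ k := by
  unfold poissonProb; positivity

theorem exp_div_le_poissonProb {μ : ℝ} (hμ : 0 < μ) {k : ℕ} (hk : k ≠ 0) :
    exp (-μ + k - k * log (k / μ)) / (exp 1 * √k) ≤ poissonProb μ k := by
  have hexp : exp (-μ + k - k * log (k / μ)) = exp (-μ) * μ ^ k / (k / exp 1) ^ k := by
    rw [exp_sub, exp_add, exp_nat_mul, exp_log (by positivity), ← mul_one (k : ℝ), exp_nat_mul,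
      mul_one]
    field_simp
    rw [← mul_pow, ← mul_pow]
    field_simp
  rw [hexp, div_div, poissonProb]
  gcongr
  exact (factorial_le_exp_one_mul_sqrt_mul hk).trans_eq (by ring)

theorem poissonProb_mul_div_pow_le {μ : ℝ} (hμ : 0 ≤ μ) (k i : ℕ) :
    poissonProb μ k * (μ / (k + i : ℕ)) ^ i ≤ poissonProb μ (k + i) := by
  have hasc : ((k + 1).ascFactorial i : ℝ) ≤ ((k + i : ℕ) : ℝ) ^ i := by
    exact_mod_cast ascFactorial_le_pow_add k i
  have hasc_pos : (0 : ℝ) < (k + 1).ascFactorial i := by exact_mod_cast ascFactorial_pos _ _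
  calc poissonProb μ k * (μ / (k + i : ℕ)) ^ i
      = exp (-μ) * μ ^ (k + i) / (k ! * ((k + i : ℕ) : ℝ) ^ i) := by
        rw [poissonProb, div_pow, pow_add]
        field_simp
    _ ≤ exp (-μ) * μ ^ (k + i) / (k ! * (k + 1).ascFactorial i) := by gcongr
    _ = poissonProb μ (k + i) := by
        rw [poissonProb, ← factorial_mul_ascFactorial]
        push_cast
        rfl

theorem summable_poissonProb (μ : ℝ) : Summable (poissonProb μ) := by
  refine ((summable_pow_div_factorial μ).mul_left (exp (-μ))).congr fun k ↦ ?_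
  rw [poissonProb, mul_div_assoc]

theorem sum_le_poissonTail {μ x : ℝ} (hμ : 0 ≤ μ) {s : Finset ℕ} (hs : ∀ j ∈ s, x ≤ j) :
    ∑ j ∈ s, poissonProb μ j ≤ poissonTail μ x := by
  have hterm_nonneg (j : ℕ) : 0 ≤ if x ≤ (j : ℝ) then poissonProb μ j else 0 := by
    split_ifs
    exacts [poissonProb_nonneg hμ j, le_rfl]
  have hsummable : Summable fun j : ℕ ↦ if x ≤ (j : ℝ) then poissonProb μ j else 0 := by
    refine (summable_poissonProb μ).of_nonneg_of_le hterm_nonneg fun j ↦ ?_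
    split_ifs
    exacts [le_rfl, poissonProb_nonneg hμ j]
  calc ∑ j ∈ s, poissonProb μ j
      = ∑ j ∈ s, if x ≤ (j : ℝ) then poissonProb μ j else 0 :=
        Finset.sum_congr rfl fun j hj ↦ (if_pos (hs j hj)).symm
    _ ≤ poissonTail μ x := hsummable.sum_le_tsum s fun j _ ↦ hterm_nonneg j

theorem add_one_mul_poissonProb_mul_le_poissonTail {μ : ℝ} (hμ : 0 < μ) {k : ℕ} (hk : μ ≤ k)
    (m : ℕ) : (m + 1) * poissonProb μ k * (μ / (k + m : ℕ)) ^ m ≤ poissonTail μ k := by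
  have hterm {i : ℕ} (hi : i ≤ m) :
      poissonProb μ k * (μ / (k + m : ℕ)) ^ m ≤ poissonProb μ (k + i) := by
    have hki : μ ≤ (k + i : ℕ) := by push_cast; linarith [(i.cast_nonneg : (0 : ℝ) ≤ i)]
    refine le_trans ?_ (poissonProb_mul_div_pow_le hμ.le k i)
    gcongr poissonProb μ k * ?_
    · exact poissonProb_nonneg hμ.le k
    calc (μ / (k + m : ℕ)) ^ m ≤ (μ / (k + i : ℕ)) ^ m := by
          gcongr
          exact hμ.trans_le hki
      _ ≤ (μ / (k + i : ℕ)) ^ i :=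
          pow_le_pow_of_le_one (by positivity) ((div_le_one (by linarith)).2 hki) hi
  calc (m + 1) * poissonProb μ k * (μ / (k + m : ℕ)) ^ m
      = ∑ i ∈ Finset.range (m + 1), poissonProb μ k * (μ / (k + m : ℕ)) ^ m := by
        simp only [Finset.sum_const, Finset.card_range, nsmul_eq_mul]
        push_cast
        ring
    _ ≤ ∑ i ∈ Finset.range (m + 1), poissonProb μ (k + i) :=
        Finset.sum_le_sum fun i hi ↦ hterm (Nat.lt_succ_iff.1 (Finset.mem_range.1 hi))
    _ = ∑ j ∈ (Finset.range (m + 1)).map (addLeftEmbedding k), poissonProb μ j := by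
        rw [Finset.sum_map]
        rfl
    _ ≤ poissonTail μ k := sum_le_poissonTail hμ.le fun j hj ↦ by
        obtain ⟨i, -, rfl⟩ := Finset.mem_map.1 hj
        simp

theorem exp_neg_mul_le_div_pow {μ a n : ℝ} (ha : 0 ≤ a) (hn : 0 < n) (hnμ : n ≤ μ * (1 + a))
    (m : ℕ) : exp (-(m * a)) ≤ (μ / n) ^ m :=
  calc exp (-(m * a)) = ((exp a) ^ m)⁻¹ := by rw [exp_neg, exp_nat_mul]
    _ ≤ ((1 + a) ^ m)⁻¹ := by
      gcongr
      linarith [add_one_le_exp a]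
    _ = (1 / (1 + a)) ^ m := by rw [one_div, inv_pow]
    _ ≤ (μ / n) ^ m := by
      refine pow_le_pow_left₀ (by positivity) ?_ m
      rwa [div_le_div_iff₀ (by positivity) hn, one_mul]

theorem one_add_le_two_mul_sq_mul_min {δ : ℝ} (hδ : 0 < δ) {m : ℕ} (hm : 1 ≤ (m + 1) * δ) :
    1 + δ ≤ 2 * (m + 1) ^ 2 * min δ (δ ^ 2) := by
  rcases le_total δ 1 with hδ1 | hδ1
  · rw [min_eq_right (by nlinarith)]
    nlinarith
  · rw [min_eq_left (by nlinarith)]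
    nlinarith [(m.cast_nonneg : (0 : ℝ) ≤ m)]

theorem sqrt_mul_one_add_le {μ δ : ℝ} (hμ : 0 ≤ μ) (hδ : 0 < δ) {m : ℕ} (hm : 1 ≤ (m + 1) * δ) :
    √(μ * (1 + δ)) ≤ 2 * (m + 1) * √(μ * min δ (δ ^ 2)) := by
  rw [← sqrt_sq (by positivity : (0 : ℝ) ≤ 2 * (m + 1)), ← sqrt_mul (by positivity)]
  refine sqrt_le_sqrt ?_
  have := mul_le_mul_of_nonneg_left (one_add_le_two_mul_sq_mul_min hδ hm) hμ
  have : 0 ≤ μ * (m + 1) ^ 2 * min δ (δ ^ 2) := by positivity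
  nlinarith

/-- Sharp Poisson lower tail bound: there is a universal constant `c > 0` such that for all
sufficiently large `λ`, for `δ ≥ 1/√λ` with `λ(1+δ)` an integer,
`P(X ≥ λ(1+δ)) ≥ c·e^{−λ h(δ)} / √(λ min{δ,δ²})`. -/
theorem sharp_poisson_tail_lower :
    ∃ c : ℝ, 0 < c ∧ ∃ Λ : ℝ, ∀ lam : ℝ, Λ ≤ lam → ∀ δ : ℝ, 1 / Real.sqrt lam ≤ δ →
      (∃ k : ℕ, (k : ℝ) = lam * (1 + δ)) →
      c * Real.exp (-(lam * poissonRate δ)) / Real.sqrt (lam * min δ (δ ^ 2)) ≤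
        poissonTail lam (lam * (1 + δ)) := by
  refine ⟨exp (-3) / 2, by positivity, 1, fun lam hlam δ hδ ⟨k, hk⟩ ↦ ?_⟩
  have hl : 0 < lam := one_pos.trans_le hlam
  have hδ0 : 0 < δ := (one_div_pos.2 (sqrt_pos.2 hl)).trans_le hδ
  have hlδ : 1 ≤ lam * δ ^ 2 := by
    rw [div_le_iff₀ (sqrt_pos.2 hl)] at hδ
    nlinarith [sq_sqrt hl.le, sqrt_nonneg lam]
  set m := ⌊1 / δ⌋₊
  have hmδ : m * δ ≤ 1 := (le_div_iff₀ hδ0).1 (Nat.floor_le (by positivity))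
  have hmδ' : 1 ≤ (m + 1) * δ := (div_le_iff₀ hδ0).1 (Nat.lt_floor_add_one _).le
  have hk0 : k ≠ 0 := by
    rw [← Nat.cast_ne_zero (R := ℝ), hk]
    positivity
  have hprob := exp_div_le_poissonProb hl hk0
  rw [show -lam + k - k * log (k / lam) = -(lam * poissonRate δ) by
    rw [hk, mul_div_cancel_left₀ _ hl.ne', poissonRate]; ring] at hprob
  have hratio : exp (-2) ≤ (lam / (k + m : ℕ)) ^ m :=
    (exp_le_exp.2 (by nlinarith)).trans <|
      exp_neg_mul_le_div_pow (a := 2 * δ) (by positivity) (by positivity) (by push_cast; nlinarith) m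
  have hsqrt := sqrt_mul_one_add_le hl.le hδ0 hmδ'
  rw [← hk] at hsqrt ⊢
  calc exp (-3) / 2 * exp (-(lam * poissonRate δ)) / √(lam * min δ (δ ^ 2))
      ≤ (m + 1) * (exp (-(lam * poissonRate δ)) / (exp 1 * √k)) * exp (-2) := by
        rw [div_le_iff₀ (by positivity), show exp (-3) = exp (-2) / exp 1 by
          rw [← exp_sub]; norm_num]
        field_simp
        exact hsqrt
    _ ≤ (m + 1) * poissonProb lam k * (lam / (k + m : ℕ)) ^ m := by
        gcongr
        exact mul_nonneg (by positivity) (poissonProb_nonneg hl.le k)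
    _ ≤ poissonTail lam k :=
        add_one_mul_poissonProb_mul_le_poissonTail hl (by rw [hk]; nlinarith) m
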